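/- With the setup of the iterated matching-removal process on a bipartite graph G on n vertices: if I_k is a maximum independent set of the residual graph G_k, I*_k a maximum k-dependent set of G, and E'_k = E(G[I*_k]) \ 𝓜_k, then |I_k| ≥ |I*_k|/2 + |E'_k|/k. -/

import Mathlib

open scoped Classical

variable {V : Type*} [Fintype V] [DecidableEq V]

/-- A matching of `G`, given as a finite set of edges of `G` that are pairwise vertex-disjoint. -/
def IsMatchingE (G : SimpleGraph V) (M : Finset (Sym2 V)) : Prop :=
  ↑M ⊆ G.edgeSet ∧ (M : Set (Sym2 V)).Pairwise fun e f => ∀ v, v ∈ e → v ∉ f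

/-- A maximum-cardinality matching of `G`. -/
def IsMaxMatchingE (G : SimpleGraph V) (M : Finset (Sym2 V)) : Prop :=
  IsMatchingE G M ∧ ∀ M', IsMatchingE G M' → M'.card ≤ M.card

/-- An independent set of `G`. -/
def IsIndepF (G : SimpleGraph V) (S : Finset V) : Prop :=
  ∀ v ∈ S, ∀ w ∈ S, ¬G.Adj v w

/-- A maximum-cardinality independent set of `G`. -/
def IsMaxIndepF (G : SimpleGraph V) (S : Finset V) : Prop :=
  IsIndepF G S ∧ ∀ S', IsIndepF G S' → S'.card ≤ S.card

/-- A `k`-dependent set: every vertex of the induced subgraph `G[S]` has degree at most `k`. -/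
def KDepSet (G : SimpleGraph V) (k : ℕ) (S : Finset V) : Prop :=
  ∀ v ∈ S, (S.filter fun w => G.Adj v w).card ≤ k

/-- A maximum-cardinality `k`-dependent set of `G`. -/
def IsMaxKDep (G : SimpleGraph V) (k : ℕ) (S : Finset V) : Prop :=
  KDepSet G k S ∧ ∀ T, KDepSet G k T → T.card ≤ S.card

/-- The edges of the induced subgraph `G[S]`. -/
noncomputable def inducedEdges (G : SimpleGraph V) (S : Finset V) : Finset (Sym2 V) :=
  G.edgeFinset.filter fun e => ∀ v ∈ e, v ∈ S

/-- The residual graph after deleting the matchings `M 0, ..., M (i-1)` from `G`. -/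
def resid (G : SimpleGraph V) (M : ℕ → Finset (Sym2 V)) (i : ℕ) : SimpleGraph V :=
  G.deleteEdges (⋃ j ∈ Set.Iio i, (M j : Set (Sym2 V)))

/-- The accumulated set of deleted edges `M 0 ∪ ... ∪ M (k-1)`. -/
def accumM (M : ℕ → Finset (Sym2 V)) (k : ℕ) : Finset (Sym2 V) :=
  (Finset.range k).biUnion M

/-!
König's theorem on the residual graph `G_k` gives `n ≤ |I_k| + ν(G_k) ≤ |I_k| + |M_k|`. Each `M_i`
is maximum in `G_{i-1} ⊇ G_{k-1}`, so `|M_k|` is the smallest of the `k` pairwise disjoint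
matchings and `k |I_k| ≥ k n - |𝓜_k|`.

Conversely, the edges of `𝓜_k` inside `I*_k` are the edges of `G[I*_k]` outside `E'_k`, at most
`k |I*_k| / 2 - |E'_k|` of them by the degree bound in `G[I*_k]`; every other edge of `𝓜_k` meets
the complement of `I*_k`, where each vertex lies on at most one edge of each matching. Hence
`|𝓜_k| ≤ k |I*_k| / 2 - |E'_k| + k (n - |I*_k|)`, and the two bounds combine to the claim.
-/

open Finset

/-- Hall's theorem with deficiency `d`: adjoin `d` common new elements to every `t i`. -/
theorem exists_partialMatching_of_card_le_card_biUnion_add {ι α : Type*} [Fintype ι]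
    [DecidableEq α] (t : ι → Finset α) (d : ℕ) (h : ∀ s : Finset ι, #s ≤ #(s.biUnion t) + d) :
    ∃ P : Finset (ι × α), (∀ p ∈ P, p.2 ∈ t p.1) ∧ Set.InjOn Prod.fst (P : Set (ι × α)) ∧
      Set.InjOn Prod.snd (P : Set (ι × α)) ∧ Fintype.card ι ≤ #P + d := by
  let t' : ι → Finset (α ⊕ Fin d) := fun i => (t i).disjSum univ
  have hall : ∀ s : Finset ι, #s ≤ #(s.biUnion t') := by
    intro s
    rcases s.eq_empty_or_nonempty with rfl | ⟨i₀, hi₀⟩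
    · simp
    have hs : s.biUnion t' = (s.biUnion t).disjSum univ := by
      ext (a | b) <;> simp [t']
      exact ⟨i₀, hi₀⟩
    simpa [hs] using h s
  obtain ⟨f, hf, hft⟩ := (all_card_le_biUnion_card_iff_exists_injective t').mp hall
  have hleft : ∀ i a, f i = .inl a → a ∈ t i := fun i a hia => by
    simpa [t', hia] using hft i
  refine ⟨(univ ×ˢ univ.biUnion t).filter fun p => f p.1 = .inl p.2, ?_, ?_, ?_, ?_⟩
  · intro p hp
    exact hleft _ _ (mem_filter.1 hp).2
  · intro p hp q hq hpq
    have := (mem_filter.1 hp).2.symm.trans (hpq ▸ (mem_filter.1 hq).2)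
    exact Prod.ext hpq (Sum.inl_injective this)
  · intro p hp q hq hpq
    exact Prod.ext (hf ((mem_filter.1 hp).2.trans (hpq ▸ (mem_filter.1 hq).2.symm))) hpq
  · have hL : #(univ.filter fun i => (f i).isLeft) ≤
        #((univ ×ˢ univ.biUnion t).filter fun p => f p.1 = .inl p.2) := by
      refine card_le_card_of_surjOn Prod.fst fun i hi => ?_
      obtain ⟨a, ha⟩ := Sum.isLeft_iff.1 (mem_filter.1 hi).2
      exact ⟨(i, a), by simpa [ha] using ⟨i, hleft i a ha⟩, rfl⟩
    have hR : #(univ.filter fun i => ¬(f i).isLeft) ≤ d := by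
      calc _ ≤ #((∅ : Finset α).disjSum (univ : Finset (Fin d))) := by
            refine card_le_card_of_injOn f (fun i hi => ?_) hf.injOn
            obtain ⟨b, hb⟩ := Sum.isRight_iff.1 (by simpa using (mem_filter.1 hi).2)
            simp [hb]
        _ = d := by simp
    have := card_filter_add_card_filter_not (s := (univ : Finset ι)) (fun i => (f i).isLeft)
    rw [card_univ] at this
    omega

section Konig

variable {V : Type*} {H : SimpleGraph V}

theorem isMatchingE_image_mk [DecidableEq V] {P : Finset (V × V)}
    (hadj : ∀ p ∈ P, H.Adj p.1 p.2) (hfst : Set.InjOn Prod.fst (P : Set (V × V)))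
    (hsnd : Set.InjOn Prod.snd (P : Set (V × V))) (hdisj : ∀ p ∈ P, ∀ q ∈ P, p.1 ≠ q.2) :
    IsMatchingE H (P.image fun p => s(p.1, p.2)) := by
  refine ⟨?_, ?_⟩
  · rintro _ he
    obtain ⟨p, hp, rfl⟩ := mem_image.1 (mem_coe.1 he)
    exact hadj p hp
  · rintro _ he _ hf hne v hve hvf
    obtain ⟨p, hp, rfl⟩ := mem_image.1 (mem_coe.1 he)
    obtain ⟨q, hq, rfl⟩ := mem_image.1 (mem_coe.1 hf)
    have hpq : p ≠ q := fun h => hne (h ▸ rfl)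
    rcases Sym2.mem_iff.1 hve with rfl | rfl <;> rcases Sym2.mem_iff.1 hvf with h | h
    · exact hpq (hfst hp hq h)
    · exact hdisj p hp q hq h
    · exact hdisj q hq p hp h.symm
    · exact hpq (hsnd hp hq h)

theorem card_image_mk [DecidableEq V] {P : Finset (V × V)} (hdisj : ∀ p ∈ P, ∀ q ∈ P, p.1 ≠ q.2) :
    #(P.image fun p => s(p.1, p.2)) = #P := by
  refine card_image_of_injOn fun p hp q hq hpq => ?_
  rcases Sym2.mk_eq_mk_iff.1 hpq with h | h
  · exact h
  · exact absurd (congrArg Prod.fst h) (hdisj p hp q hq)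

theorem exists_bipartition_of_colorable_two [Fintype V] (h : H.Colorable 2) :
    ∃ A : Finset V, ∀ v w, H.Adj v w → (v ∈ A ↔ w ∉ A) := by
  obtain ⟨c⟩ := h
  refine ⟨univ.filter fun v => c v = 0, fun v w hvw => ?_⟩
  have := c.valid hvw
  simp only [mem_filter, mem_univ, true_and]
  omega

theorem card_le_card_add_card_inter_union_compl_sdiff [Fintype V] [DecidableEq V]
    (s A X : Finset V) : #s ≤ #X + #((s ∩ A) ∪ (Aᶜ \ X)) := by
  have hdisj : Disjoint (s ∩ A) (Aᶜ \ X) :=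
    disjoint_left.2 fun v hv hv' => (mem_compl.1 (mem_sdiff.1 hv').1) (mem_inter.1 hv).2
  have hsA : #(s \ A) ≤ #Aᶜ := card_le_card fun v hv => mem_compl.2 (mem_sdiff.1 hv).2
  have := card_inter_add_card_sdiff s A
  have := card_le_card_sdiff_add_card (s := Aᶜ) (t := X)
  rw [card_union_of_disjoint hdisj]
  omega

theorem isIndepF_inter_union_compl_sdiff [Fintype V] [DecidableEq V] {A : Finset V}
    (hA : ∀ v w, H.Adj v w → (v ∈ A ↔ w ∉ A)) (s : Finset V) :
    IsIndepF H ((s ∩ A) ∪ (Aᶜ \ s.biUnion fun v => Aᶜ.filter (H.Adj v))) := by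
  intro v hv w hw hvw
  have := hA v w hvw
  have := hvw.symm
  simp only [mem_union, mem_inter, mem_sdiff, mem_compl, mem_biUnion, mem_filter, not_exists,
    not_and] at hv hw
  grind

/-- König's theorem, in the form `α(H) + ν(H) ≥ |V|`. The independent set maximising its size
among the `(s ∩ A) ∪ (Aᶜ \ N(s))` certifies Hall's condition with deficiency equal to that size. -/
theorem exists_isIndepF_isMatchingE_card_le [Fintype V] [DecidableEq V] (h : H.Colorable 2) :
    ∃ S N, IsIndepF H S ∧ IsMatchingE H N ∧ Fintype.card V ≤ #S + #N := by
  obtain ⟨A, hA⟩ := exists_bipartition_of_colorable_two h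
  let t : V → Finset V := fun v => Aᶜ.filter (H.Adj v)
  let S : Finset V → Finset V := fun s => (s ∩ A) ∪ (Aᶜ \ s.biUnion t)
  obtain ⟨s₀, -, hs₀⟩ :=
    (univ : Finset (Finset V)).exists_max_image (fun s => #(S s)) ⟨∅, mem_univ _⟩
  obtain ⟨P, hPt, hfst, hsnd, hcard⟩ := exists_partialMatching_of_card_le_card_biUnion_add t _
    fun s => (card_le_card_add_card_inter_union_compl_sdiff s A _).trans
      (Nat.add_le_add_left (hs₀ s (mem_univ s)) _)
  have hPadj : ∀ p ∈ P, H.Adj p.1 p.2 := fun p hp => (mem_filter.1 (hPt p hp)).2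
  have hPdisj : ∀ p ∈ P, ∀ q ∈ P, p.1 ≠ q.2 := by
    intro p hp q hq hpq
    have hp1 : p.1 ∈ A := (hA _ _ (hPadj p hp)).2 (mem_compl.1 (mem_filter.1 (hPt p hp)).1)
    exact mem_compl.1 (mem_filter.1 (hPt q hq)).1 (hpq ▸ hp1)
  refine ⟨S s₀, _, isIndepF_inter_union_compl_sdiff hA s₀,
    isMatchingE_image_mk hPadj hfst hsnd hPdisj, ?_⟩
  rw [card_image_mk hPdisj]
  omega

end Konig

section Matchings

variable {V : Type*} {G H : SimpleGraph V} {N : Finset (Sym2 V)}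

theorem IsMatchingE.mono (hGH : G ≤ H) (hN : IsMatchingE G N) : IsMatchingE H N :=
  ⟨fun _ he => SimpleGraph.edgeSet_mono hGH (hN.1 he), hN.2⟩

theorem IsMatchingE.card_filter_mem_le_one [DecidableEq V] (hN : IsMatchingE G N) (v : V) :
    #(N.filter (v ∈ ·)) ≤ 1 :=
  card_le_one.2 fun _ he _ hf => by
    by_contra hne
    exact hN.2 (mem_filter.1 he).1 (mem_filter.1 hf).1 hne v (mem_filter.1 he).2
      (mem_filter.1 hf).2

variable {M : ℕ → Finset (Sym2 V)} {i j k : ℕ}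

theorem resid_le : resid G M i ≤ G :=
  SimpleGraph.deleteEdges_le _

theorem resid_anti (hij : i ≤ j) : resid G M j ≤ resid G M i :=
  SimpleGraph.deleteEdges_anti (Set.biUnion_subset_biUnion_left (Set.Iio_subset_Iio hij))

theorem disjoint_of_isMatchingE_resid (hj : IsMatchingE (resid G M j) (M j)) (hij : i < j) :
    Disjoint (M i) (M j) := by
  refine disjoint_left.2 fun e hei hej => ?_
  have he := hj.1 hej
  rw [resid, SimpleGraph.edgeSet_deleteEdges] at he
  exact he.2 (Set.mem_biUnion hij hei)

theorem card_le_card_of_isMaxMatchingE_resid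
    (hM : ∀ i < k, IsMaxMatchingE (resid G M i) (M i)) (hij : i ≤ j) (hj : j < k) :
    #(M j) ≤ #(M i) :=
  (hM i (hij.trans_lt hj)).2 _ ((hM j hj).1.mono (resid_anti hij))

theorem card_accumM [DecidableEq V] (hM : ∀ i < k, IsMatchingE (resid G M i) (M i)) :
    #(accumM M k) = ∑ i ∈ range k, #(M i) := by
  refine card_biUnion fun i hi j hj hij => ?_
  rcases lt_or_gt_of_ne hij with h | h
  · exact disjoint_of_isMatchingE_resid (hM j (mem_range.1 hj)) h
  · exact (disjoint_of_isMatchingE_resid (hM i (mem_range.1 hi)) h).symm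

theorem mul_card_le_card_accumM [DecidableEq V]
    (hM : ∀ i < j + 1, IsMaxMatchingE (resid G M i) (M i)) :
    (j + 1) * #(M j) ≤ #(accumM M (j + 1)) := by
  rw [card_accumM fun i hi => (hM i hi).1]
  simpa using card_nsmul_le_sum (range (j + 1)) (fun i => #(M i)) #(M j) fun i hi =>
    card_le_card_of_isMaxMatchingE_resid hM (Nat.lt_succ_iff.1 (mem_range.1 hi)) j.lt_succ_self

theorem mul_card_le_mul_card_add_card_accumM [Fintype V] [DecidableEq V] (hG : G.Colorable 2)
    (hM : ∀ i < j + 1, IsMaxMatchingE (resid G M i) (M i)) {I : Finset V}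
    (hI : IsMaxIndepF (resid G M (j + 1)) I) :
    (j + 1) * Fintype.card V ≤ (j + 1) * #I + #(accumM M (j + 1)) := by
  obtain ⟨S, N, hS, hN, hcard⟩ :=
    exists_isIndepF_isMatchingE_card_le (hG.mono_left (resid_le (M := M) (i := j + 1)))
  have hSI : #S ≤ #I := hI.2 S hS
  have hNM : #N ≤ #(M j) := (hM j j.lt_succ_self).2 N (hN.mono (resid_anti j.le_succ))
  calc (j + 1) * Fintype.card V ≤ (j + 1) * (#I + #(M j)) := Nat.mul_le_mul_left _ (by omega)
    _ = (j + 1) * #I + (j + 1) * #(M j) := mul_add _ _ _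
    _ ≤ (j + 1) * #I + #(accumM M (j + 1)) := Nat.add_le_add_left (mul_card_le_card_accumM hM) _

theorem card_filter_mem_accumM_le [DecidableEq V] (hM : ∀ i < k, IsMatchingE G (M i)) (v : V) :
    #((accumM M k).filter (v ∈ ·)) ≤ k := by
  calc #((accumM M k).filter (v ∈ ·))
      ≤ ∑ i ∈ range k, #((M i).filter (v ∈ ·)) := by
        rw [accumM, filter_biUnion]
        exact card_biUnion_le
    _ ≤ ∑ _i ∈ range k, 1 :=
        sum_le_sum fun i hi => (hM i (mem_range.1 hi)).card_filter_mem_le_one v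
    _ = k := by simp

theorem accumM_subset_edgeFinset [Fintype V] [DecidableEq V]
    (hM : ∀ i < k, IsMatchingE G (M i)) : accumM M k ⊆ G.edgeFinset := by
  intro e he
  obtain ⟨i, hi, hei⟩ := mem_biUnion.1 he
  exact SimpleGraph.mem_edgeFinset.2 ((hM i (mem_range.1 hi)).1 hei)

end Matchings

section InducedEdges

variable {V : Type*} [Fintype V] [DecidableEq V] {G : SimpleGraph V} {S : Finset V} {k : ℕ}

theorem card_sdiff_inducedEdges_le {E : Finset (Sym2 V)} (hE : E ⊆ G.edgeFinset) :
    #(E \ inducedEdges G S) ≤ ∑ v ∈ Sᶜ, #(E.filter (v ∈ ·)) := by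
  refine (card_le_card fun e he => ?_).trans card_biUnion_le
  obtain ⟨he, hind⟩ := mem_sdiff.1 he
  obtain ⟨v, hve, hvS⟩ : ∃ v ∈ e, v ∉ S := by
    simpa [inducedEdges, hE he] using hind
  exact mem_biUnion.2 ⟨v, mem_compl.2 hvS, mem_filter.2 ⟨he, hve⟩⟩

theorem KDepSet.two_mul_card_inducedEdges_le (hS : KDepSet G k S) :
    2 * #(inducedEdges G S) ≤ k * #S := by
  rw [mul_comm 2, mul_comm k]
  refine card_mul_le_card_mul (fun (e : Sym2 V) (v : V) => v ∈ e) (fun e he => ?_) (fun v hv => ?_)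
  · induction e using Sym2.ind with
    | _ x y =>
    obtain ⟨hxy, hxyS⟩ := mem_filter.1 he
    have hpair : {x, y} ⊆ S.bipartiteAbove (fun e v => v ∈ e) s(x, y) := by
      intro w hw
      simp only [mem_insert, mem_singleton] at hw
      rcases hw with rfl | rfl <;> simp [bipartiteAbove, hxyS]
    rw [← card_pair (SimpleGraph.mem_edgeFinset.1 hxy).ne]
    exact card_le_card hpair
  · refine (card_le_card_of_surjOn (fun w => s(v, w)) fun e he => ?_).trans (hS v hv)
    obtain ⟨he, hve⟩ := mem_filter.1 he
    obtain ⟨hadj, heS⟩ := mem_filter.1 he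
    obtain ⟨w, rfl⟩ := Sym2.mem_iff_exists.1 hve
    exact ⟨w, mem_filter.2 ⟨heS w (Sym2.mem_mk_right v w), SimpleGraph.mem_edgeFinset.1 hadj⟩, rfl⟩

theorem two_mul_card_accumM_le {M : ℕ → Finset (Sym2 V)} (hM : ∀ i < k, IsMatchingE G (M i))
    (hS : KDepSet G k S) :
    2 * #(accumM M k) + 2 * #(inducedEdges G S \ accumM M k) ≤ k * #S + 2 * (k * #Sᶜ) := by
  have hsplit := card_inter_add_card_sdiff (accumM M k) (inducedEdges G S)
  have hind := card_inter_add_card_sdiff (inducedEdges G S) (accumM M k)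
  rw [inter_comm] at hind
  have hout : #(accumM M k \ inducedEdges G S) ≤ k * #Sᶜ := by
    calc _ ≤ ∑ v ∈ Sᶜ, #((accumM M k).filter (v ∈ ·)) :=
          card_sdiff_inducedEdges_le (accumM_subset_edgeFinset hM)
      _ ≤ ∑ _v ∈ Sᶜ, k := sum_le_sum fun v _ => card_filter_mem_accumM_le hM v
      _ = k * #Sᶜ := by rw [sum_const, smul_eq_mul, mul_comm]
  have := hS.two_mul_card_inducedEdges_le
  omega

end InducedEdges

theorem stmt5 (G : SimpleGraph V) (hG : G.Colorable 2) (k : ℕ) (hk : 1 ≤ k)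
    (M : ℕ → Finset (Sym2 V)) (hM : ∀ i < k, IsMaxMatchingE (resid G M i) (M i))
    (I : Finset V) (hI : IsMaxIndepF (resid G M k) I)
    (Istar : Finset V) (hIstar : IsMaxKDep G k Istar) :
    (I.card : ℝ) ≥
      (Istar.card : ℝ) / 2 + ((inducedEdges G Istar) \ accumM M k).card / k := by
  obtain ⟨j, rfl⟩ : ∃ j, k = j + 1 := ⟨k - 1, by omega⟩
  have hlower := mul_card_le_mul_card_add_card_accumM hG hM hI
  have hupper := two_mul_card_accumM_le (fun i hi => (hM i hi).1.mono resid_le) hIstar.1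
  have key : (j + 1) * #Istar + 2 * #(inducedEdges G Istar \ accumM M (j + 1)) ≤
      2 * ((j + 1) * #I) := by
    rw [← card_add_card_compl Istar, mul_add] at hlower
    omega
  rw [ge_iff_le, div_add_div _ _ two_ne_zero (by positivity), div_le_iff₀ (by positivity)]
  have keyR := (Nat.cast_le (α := ℝ)).2 key
  push_cast at keyR ⊢
  linarith
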